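/- arXiv:2005.14134 — 5 statements merged into one kernel-verified Lean document; each statement's English description precedes it below -/
import Mathlib

section
/- The Traced-noun composition rule preserves hyponymy: if n₁, n₂, v₁, v₂ are positive semidefinite real m×m matrices with n₁ ≤ n₂ and v₁ ≤ v₂ in the Löwner order, then tr(n₁)·v₁ ≤ tr(n₂)·v₂ in the Löwner order. -/
open Matrix

theorem Matrix.PosSemidef.smul_sub_smul {ι : Type*} [Fintype ι] {A B : Matrix ι ι ℝ} {a b : ℝ}
    (ha : 0 ≤ a) (hab : 0 ≤ b - a) (hB : B.PosSemidef) (hAB : (B - A).PosSemidef) :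
    (b • B - a • A).PosSemidef := by
  have hsplit : b • B - a • A = a • (B - A) + (b - a) • B := by
    rw [smul_sub, sub_smul]; abel
  rw [hsplit]
  exact (hAB.smul ha).add (hB.smul hab)

theorem stmt_5_general (m : ℕ)
    (n₁ n₂ v₁ v₂ : Matrix (Fin m) (Fin m) ℝ)
    (hn₁ : n₁.PosSemidef)
    (hv₂ : v₂.PosSemidef)
    (hn : (n₂ - n₁).PosSemidef) (hv : (v₂ - v₁).PosSemidef) :
    (n₂.trace • v₂ - n₁.trace • v₁).PosSemidef :=
  hv₂.smul_sub_smul hn₁.trace_nonneg (trace_sub n₂ n₁ ▸ hn.trace_nonneg) hv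

/-- The Traced-noun rule `Compr(n,v) = tr(n) • v` preserves hyponymy. -/
theorem stmt_5 (m : ℕ)
    (n₁ n₂ v₁ v₂ : Matrix (Fin m) (Fin m) ℝ)
    (hn₁ : n₁.PosSemidef) (hn₂ : n₂.PosSemidef)
    (hv₁ : v₁.PosSemidef) (hv₂ : v₂.PosSemidef)
    (hn : (n₂ - n₁).PosSemidef) (hv : (v₂ - v₁).PosSemidef) :
    (n₂.trace • v₂ - n₁.trace • v₁).PosSemidef :=
  stmt_5_general m n₁ n₂ v₁ v₂ hn₁ hv₂ hn hv
end

section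
/- The Diag composition rule preserves hyponymy: if n₁, n₂, v₁, v₂ are positive semidefinite real m×m matrices with n₁ ≤ n₂ and v₁ ≤ v₂ in the Löwner order, then the diagonal matrix whose (i,i) entry is (n₁)_{ii}(v₁)_{ii} is ≤, in the Löwner order, the diagonal matrix whose (i,i) entry is (n₂)_{ii}(v₂)_{ii}; in particular for psd n, v this diagonal matrix diag(n)·diag(v) is psd. -/
namespace Matrix

variable {ι R : Type*} [Ring R] [PartialOrder R] [StarRing R]

theorem PosSemidef.diag_le_diag_of_sub [IsOrderedAddMonoid R] {A B : Matrix ι ι R}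
    (h : (B - A).PosSemidef) (i : ι) : A i i ≤ B i i :=
  sub_nonneg.mp h.diag_nonneg

variable [StarOrderedRing R] [IsOrderedRing R] [DecidableEq ι]

theorem PosSemidef.diagonal_diag_mul_diag {A B : Matrix ι ι R} (hA : A.PosSemidef)
    (hB : B.PosSemidef) : (diagonal fun i => A i i * B i i).PosSemidef :=
  posSemidef_diagonal_iff.mpr fun _ => mul_nonneg hA.diag_nonneg hB.diag_nonneg

theorem PosSemidef.diagonal_diag_mul_diag_sub {A₁ A₂ B₁ B₂ : Matrix ι ι R}
    (hA₁ : A₁.PosSemidef) (hB₁ : B₁.PosSemidef) (hA : (A₂ - A₁).PosSemidef)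
    (hB : (B₂ - B₁).PosSemidef) :
    (diagonal (fun i => A₂ i i * B₂ i i) - diagonal fun i => A₁ i i * B₁ i i).PosSemidef := by
  rw [diagonal_sub, posSemidef_diagonal_iff]
  intro i
  have hA_le := hA.diag_le_diag_of_sub i
  exact sub_nonneg.mpr <| mul_le_mul hA_le (hB.diag_le_diag_of_sub i) hB₁.diag_nonneg
    (hA₁.diag_nonneg.trans hA_le)

end Matrix

theorem stmt_7_general (m : ℕ)
    (n₁ n₂ v₁ v₂ : Matrix (Fin m) (Fin m) ℝ)
    (hn₁ : n₁.PosSemidef)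
    (hv₁ : v₁.PosSemidef)
    (hn : (n₂ - n₁).PosSemidef) (hv : (v₂ - v₁).PosSemidef) :
    (Matrix.diagonal (fun i => n₂ i i * v₂ i i)
      - Matrix.diagonal (fun i => n₁ i i * v₁ i i)).PosSemidef ∧
    (Matrix.diagonal (fun i => n₁ i i * v₁ i i)).PosSemidef :=
  ⟨hn₁.diagonal_diag_mul_diag_sub hv₁ hn hv, hn₁.diagonal_diag_mul_diag hv₁⟩

/-- The Diag rule `Compr(n,v) = diag(n)·diag(v)` preserves hyponymy, and in
particular maps pairs of psd matrices to psd matrices. -/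
theorem stmt_7 (m : ℕ)
    (n₁ n₂ v₁ v₂ : Matrix (Fin m) (Fin m) ℝ)
    (hn₁ : n₁.PosSemidef) (hn₂ : n₂.PosSemidef)
    (hv₁ : v₁.PosSemidef) (hv₂ : v₂.PosSemidef)
    (hn : (n₂ - n₁).PosSemidef) (hv : (v₂ - v₁).PosSemidef) :
    (Matrix.diagonal (fun i => n₂ i i * v₂ i i)
      - Matrix.diagonal (fun i => n₁ i i * v₁ i i)).PosSemidef ∧
    (Matrix.diagonal (fun i => n₁ i i * v₁ i i)).PosSemidef :=
  stmt_7_general m n₁ n₂ v₁ v₂ hn₁ hv₁ hn hv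
end

section
/- The Summed-noun composition rule preserves hyponymy: for a positive semidefinite real m×m matrix n, the total entry sum Σ_{ij} n_{ij} is nonnegative, and if n₁, n₂, v₁, v₂ are positive semidefinite real m×m matrices with n₁ ≤ n₂ and v₁ ≤ v₂ in the Löwner order, then (Σ_{ij} (n₁)_{ij})·v₁ ≤ (Σ_{ij} (n₂)_{ij})·v₂ in the Löwner order. -/
/-!
The entry sum of `n` is the quadratic form `𝟙ᵀ n 𝟙`, hence nonnegative for psd `n`, and it is
additive in `n`. With `a = Σ n₁ ≤ b = Σ n₂`, the difference
`b • v₂ - a • v₁ = b • (v₂ - v₁) + (b - a) • v₁` is a sum of nonnegative multiples of psd matrices.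
-/

open Matrix

namespace Matrix.PosSemidef

variable {n R : Type*} [CommRing R] [PartialOrder R] [StarRing R]

theorem sum_entries_nonneg [Fintype n] {A : Matrix n n R} (hA : A.PosSemidef) :
    0 ≤ ∑ i, ∑ j, A i j := by
  simpa [dotProduct, mulVec] using hA.dotProduct_mulVec_nonneg (fun _ => 1)

variable [StarOrderedRing R] [PosSMulMono R R]

theorem smul_sub_smul_s8 {a b : R} {v w : Matrix n n R} (ha : 0 ≤ a) (hab : a ≤ b)
    (hv : v.PosSemidef) (hvw : (w - v).PosSemidef) : (b • w - a • v).PosSemidef := by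
  have hb : 0 ≤ b := ha.trans hab
  have hsplit : b • w - a • v = b • (w - v) + (b - a) • v := by
    rw [smul_sub, sub_smul]; abel
  rw [hsplit]
  exact (hvw.smul hb).add (hv.smul (sub_nonneg.mpr hab))

end Matrix.PosSemidef

/-- The Summed-noun rule `Compr(n,v) = (Σᵢⱼ nᵢⱼ) • v` preserves hyponymy: the
total entry sum of a psd matrix is nonnegative, and the rule is monotone in the
Löwner order on psd arguments. -/
theorem stmt_8 (m : ℕ) :
    (∀ n : Matrix (Fin m) (Fin m) ℝ, n.PosSemidef → 0 ≤ ∑ i, ∑ j, n i j) ∧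
    (∀ n₁ n₂ v₁ v₂ : Matrix (Fin m) (Fin m) ℝ,
      n₁.PosSemidef → n₂.PosSemidef → v₁.PosSemidef → v₂.PosSemidef →
      (n₂ - n₁).PosSemidef → (v₂ - v₁).PosSemidef →
      ((∑ i, ∑ j, n₂ i j) • v₂ - (∑ i, ∑ j, n₁ i j) • v₁).PosSemidef) := by
  refine ⟨fun n hn => hn.sum_entries_nonneg, fun n₁ n₂ v₁ v₂ hn₁ _ hv₁ _ hn hv => ?_⟩
  have hle : ∑ i, ∑ j, n₁ i j ≤ ∑ i, ∑ j, n₂ i j := by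
    simpa [Finset.sum_sub_distrib] using hn.sum_entries_nonneg
  exact PosSemidef.smul_sub_smul_s8 hn₁.sum_entries_nonneg hle hv₁ hv
end

section
/- Phaser does not preserve hyponymy: there exist positive semidefinite real 2×2 matrices n₁, n₂, v₁, v₂ with n₁ ≤ n₂ and v₁ ≤ v₂ in the Löwner order such that v₁^{1/2} n₁ v₁^{1/2} ≤ v₂^{1/2} n₂ v₂^{1/2} fails (i.e. v₂^{1/2} n₂ v₂^{1/2} − v₁^{1/2} n₁ v₁^{1/2} is not positive semidefinite), where w^{1/2} denotes the unique positive semidefinite square root of a psd matrix w. -/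
open Matrix

namespace Matrix.PosSemidef

open scoped ComplexOrder in
/-- The positive semidefinite square root of a psd matrix, as defined in the older Mathlib
(`Matrix.PosSemidef.sqrt`, since removed). -/
noncomputable def sqrt {n : Type*} {𝕜 : Type*} [Fintype n] [DecidableEq n] [RCLike 𝕜]
    {A : Matrix n n 𝕜} (hA : A.PosSemidef) : Matrix n n 𝕜 :=
  hA.1.eigenvectorUnitary.1 * diagonal ((↑) ∘ (Real.sqrt ∘ hA.1.eigenvalues)) *
    (star hA.1.eigenvectorUnitary : Matrix n n 𝕜)

end Matrix.PosSemidef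

/-!
Take `n₁ = n₂ = v₁ = e₁e₁ᵀ` and `v₂ = !![5, 4; 4, 5] ≥ e₁e₁ᵀ`, whose square root is
`!![2, 1; 1, 2]`. Then `v₂^{1/2} n₂ v₂^{1/2} = uuᵀ` with `u = (2, 1)`, and
`uuᵀ - e₁e₁ᵀ = !![3, 2; 2, 1]` has determinant `-1`, so it is not psd.
-/

namespace Matrix.PosSemidef

open scoped ComplexOrder

variable {n 𝕜 : Type*} [Fintype n] [DecidableEq n] [RCLike 𝕜] {A B : Matrix n n 𝕜}

lemma sqrt_eq_cfc (hA : A.PosSemidef) : hA.sqrt = cfc Real.sqrt A := by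
  rw [hA.1.cfc_eq]
  rfl

open scoped MatrixOrder in
lemma sqrt_eq_of_sq_eq (hB : B.PosSemidef) (hA : A.PosSemidef) (h : A ^ 2 = B) :
    hB.sqrt = A := by
  rw [sqrt_eq_cfc, ← cfcₙ_eq_cfc Real.continuous_sqrt.continuousOn Real.sqrt_zero,
    ← CFC.sqrt_eq_real_sqrt B hB.nonneg]
  exact CFC.sqrt_unique (by rw [← sq, h]) hA.nonneg

end Matrix.PosSemidef

theorem Matrix.posSemidef_fin_two_iff {a b c : ℝ} :
    (!![a, b; b, c] : Matrix (Fin 2) (Fin 2) ℝ).PosSemidef ↔ 0 ≤ a ∧ 0 ≤ c ∧ b ^ 2 ≤ a * c := by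
  refine ⟨fun h ↦ ⟨by simpa using h.diag_nonneg (i := 0), by simpa using h.diag_nonneg (i := 1),
    by nlinarith [h.det_nonneg, det_fin_two_of a b b c]⟩, fun ⟨ha, hc, hb⟩ ↦ ?_⟩
  refine .of_dotProduct_mulVec_nonneg (by ext i j; fin_cases i <;> fin_cases j <;> rfl) fun x ↦ ?_
  simp only [dotProduct, Pi.star_apply, star_trivial, mulVec, of_apply, cons_val', cons_val_fin_one,
    Fin.sum_univ_two, cons_val_zero, cons_val_one]
  rcases ha.eq_or_lt with rfl | ha
  · obtain rfl : b = 0 := by nlinarith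
    nlinarith [mul_nonneg hc (sq_nonneg (x 1))]
  · nlinarith [sq_nonneg (a * x 0 + b * x 1), mul_nonneg (sub_nonneg.2 hb) (sq_nonneg (x 1))]

/-- Phaser does not preserve hyponymy: there are psd 2×2 matrices with
`n₁ ≤ n₂` and `v₁ ≤ v₂` in the Löwner order, but
`v₂^{1/2} n₂ v₂^{1/2} − v₁^{1/2} n₁ v₁^{1/2}` is not psd. -/
theorem stmt_14 :
    ∃ (n₁ n₂ v₁ v₂ : Matrix (Fin 2) (Fin 2) ℝ)
      (_hn₁ : n₁.PosSemidef) (_hn₂ : n₂.PosSemidef)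
      (hv₁ : v₁.PosSemidef) (hv₂ : v₂.PosSemidef),
      (n₂ - n₁).PosSemidef ∧ (v₂ - v₁).PosSemidef ∧
      ¬ (hv₂.sqrt * n₂ * hv₂.sqrt - hv₁.sqrt * n₁ * hv₁.sqrt).PosSemidef := by
  have he : (!![1, 0; 0, 0] : Matrix (Fin 2) (Fin 2) ℝ).PosSemidef :=
    posSemidef_fin_two_iff.2 (by norm_num)
  have hv : (!![5, 4; 4, 5] : Matrix (Fin 2) (Fin 2) ℝ).PosSemidef :=
    posSemidef_fin_two_iff.2 (by norm_num)
  have hr : (!![2, 1; 1, 2] : Matrix (Fin 2) (Fin 2) ℝ).PosSemidef :=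
    posSemidef_fin_two_iff.2 (by norm_num)
  have sqrt_e : he.sqrt = !![1, 0; 0, 0] :=
    he.sqrt_eq_of_sq_eq he (by rw [sq, mul_fin_two]; norm_num)
  have sqrt_v : hv.sqrt = !![2, 1; 1, 2] :=
    hv.sqrt_eq_of_sq_eq hr (by rw [sq, mul_fin_two]; norm_num)
  refine ⟨_, _, _, _, he, he, he, hv, by rw [sub_self]; exact .zero, ?_, ?_⟩
  · rw [show !![5, 4; 4, 5] - !![1, 0; 0, 0] = !![(4 : ℝ), 4; 4, 5] by norm_num [empty_eq],
      posSemidef_fin_two_iff]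
    norm_num
  · rw [sqrt_e, sqrt_v, show !![2, 1; 1, 2] * !![1, 0; 0, 0] * !![2, 1; 1, 2] -
      !![1, 0; 0, 0] * !![1, 0; 0, 0] * !![1, 0; 0, 0] = !![(3 : ℝ), 2; 2, 1] by
        norm_num [empty_eq], posSemidef_fin_two_iff]
    norm_num
end

section
/- Choi–Kraus theorem (real case): let φ : M_m(ℝ) → M_m(ℝ) be a linear map and define its Choi matrix C(φ) = Σ_{i,j} φ(E_{ij}) ⊗ E_{ij} ∈ M_{m²}(ℝ), where E_{ij} is the matrix with a 1 in entry (i,j) and 0 elsewhere and ⊗ is the Kronecker product. Then C(φ) is positive semidefinite if and only if there exists a finite family of real m×m matrices K₁,…,K_r such that φ(a) = Σ_{l=1}^r K_l a K_lᵀ for all a ∈ M_m(ℝ). -/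
/-!
The Choi matrix of `a ↦ Σₗ Kₗ a Kₗᵀ` is `Bᵀ B`, where row `l` of `B` is `Kₗ` flattened to a vector
indexed by `n × n`; every `B` arises this way, and a linear map is determined by its Choi matrix.
So `φ` has a Kraus decomposition iff `C(φ) = Bᵀ B` for some `B`, i.e. iff `C(φ)` is positive
semidefinite.
-/

open Matrix Kronecker

namespace Matrix

variable {n ι R : Type*}

def krausStack (K : ι → Matrix n n R) : Matrix ι (n × n) R :=
  of fun l => Function.uncurry (K l)

theorem krausStack_surjective : Function.Surjective (krausStack : (ι → Matrix n n R) → _) :=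
  fun B => ⟨fun l => of (Function.curry (B l)), rfl⟩

variable [Fintype n] [DecidableEq n] [Fintype ι] [CommSemiring R]

def choiMatrix (φ : Matrix n n R →ₗ[R] Matrix n n R) : Matrix (n × n) (n × n) R :=
  ∑ i, ∑ j, φ (single i j 1) ⊗ₖ single i j 1

theorem choiMatrix_apply (φ : Matrix n n R →ₗ[R] Matrix n n R) (p i q j : n) :
    choiMatrix φ (p, i) (q, j) = φ (single i j 1) p q := by
  simp [choiMatrix, sum_apply, single, ite_and, mul_ite]

theorem choiMatrix_injective :
    Function.Injective (choiMatrix : (Matrix n n R →ₗ[R] Matrix n n R) → _) := by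
  intro φ ψ h
  refine (stdBasis R n n).ext fun ⟨i, j⟩ => ?_
  ext p q
  simpa only [stdBasis_eq_single, choiMatrix_apply] using congrFun (congrFun h (p, i)) (q, j)

def krausMap (K : ι → Matrix n n R) : Matrix n n R →ₗ[R] Matrix n n R :=
  ∑ l, LinearMap.mulLeftRight R (K l, (K l)ᵀ)

theorem krausMap_apply (K : ι → Matrix n n R) (a : Matrix n n R) :
    krausMap K a = ∑ l, K l * a * (K l)ᵀ := by
  simp [krausMap]

theorem mul_single_mul_transpose_apply (K : Matrix n n R) (i j p q : n) :
    (K * single i j (1 : R) * Kᵀ) p q = K p i * K q j := by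
  simp [mul_apply, single, ite_and, mul_ite, mul_comm]

theorem choiMatrix_krausMap (K : ι → Matrix n n R) :
    choiMatrix (krausMap K) = (krausStack K)ᵀ * krausStack K := by
  ext ⟨p, i⟩ ⟨q, j⟩
  rw [choiMatrix_apply, krausMap_apply, sum_apply, mul_apply]
  simp only [mul_single_mul_transpose_apply]
  rfl

theorem choiMatrix_posSemidef_iff_exists_krausMap (φ : Matrix n n ℝ →ₗ[ℝ] Matrix n n ℝ) :
    (choiMatrix φ).PosSemidef ↔ ∃ (r : ℕ) (K : Fin r → Matrix n n ℝ), φ = krausMap K := by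
  constructor
  · intro h
    obtain ⟨B, hB⟩ : ∃ B : Matrix (n × n) (n × n) ℝ, choiMatrix φ = Bᴴ * B := by
      open MatrixOrder in exact CStarAlgebra.nonneg_iff_eq_star_mul_self.mp h.nonneg
    let e := Fintype.equivFin (n × n)
    obtain ⟨K, hK⟩ := krausStack_surjective (B.submatrix e.symm id)
    refine ⟨_, K, choiMatrix_injective ?_⟩
    rw [choiMatrix_krausMap, hK, hB, conjTranspose_eq_transpose_of_trivial, transpose_submatrix,
      submatrix_mul_equiv, submatrix_id_id]
  · rintro ⟨r, K, rfl⟩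
    rw [choiMatrix_krausMap, ← conjTranspose_eq_transpose_of_trivial]
    exact posSemidef_conjTranspose_mul_self _

end Matrix

/-- Choi–Kraus theorem (real case): a linear map `φ : M_m(ℝ) → M_m(ℝ)` has a
positive semidefinite Choi matrix `C(φ) = Σᵢⱼ φ(Eᵢⱼ) ⊗ Eᵢⱼ` if and only if it
admits a Kraus decomposition `φ(a) = Σₗ Kₗ a Kₗᵀ`. -/
theorem stmt_16 (m : ℕ)
    (φ : Matrix (Fin m) (Fin m) ℝ →ₗ[ℝ] Matrix (Fin m) (Fin m) ℝ) :
    (∑ i, ∑ j, φ (Matrix.single i j 1) ⊗ₖ Matrix.single i j 1).PosSemidef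
      ↔ ∃ (r : ℕ) (K : Fin r → Matrix (Fin m) (Fin m) ℝ),
          ∀ a : Matrix (Fin m) (Fin m) ℝ, φ a = ∑ l, K l * a * (K l)ᵀ := by
  simp only [← krausMap_apply, ← LinearMap.ext_iff]
  exact choiMatrix_posSemidef_iff_exists_krausMap φ
end
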